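/- arXiv:1812.03029 — 3 statements merged into one kernel-verified Lean document; each statement's English description precedes it below -/
import Mathlib

section
/- Let μ be the smallest positive root of the equation J₀(x) = J₁(x). Then the function H(r) = r·(J₀(μr)² + J₁(μr)²) is strictly monotonically increasing on the interval (0,1). -/
/-!
With `J₀' = -J₁` and `J₁' = J₀ - J₁ / x` (both read off the integral representation),
`H'(r) = J₀(μr)² - J₁(μr)² = (J₀ - J₁)(J₀ + J₁)(μr)`, so it suffices that both factors are
positive on `[0, μ)`. Both equal `1` at `0`. `J₀ - J₁` has no zero in `(0, μ)` by the choice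
of `μ`. At a first zero `σ` of `J₀ + J₁` we would have `J₁ = -J₀ < 0 < J₀`, hence
`(J₀ + J₁)'(σ) = J₀ - J₁ - J₁ / σ > 0`, which is impossible for a positive function reaching
its first zero.
-/

open Real

/-- Bessel function of the first kind of integer order `n`, via the
standard integral representation. -/
noncomputable def besselJ (n : ℕ) (x : ℝ) : ℝ :=
  (1 / π) * ∫ θ in (0:ℝ)..π, Real.cos (n * θ - x * Real.sin θ)

open Set Filter Topology intervalIntegral

theorem pos_on_Ico_of_deriv_pos_at_zeros {f : ℝ → ℝ} {a b : ℝ} (hf : ContinuousOn f (Ico a b))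
    (ha : 0 < f a) (hzero : ∀ x ∈ Ioo a b, f x = 0 → 0 < deriv f x) :
    ∀ x ∈ Ico a b, 0 < f x := by
  by_contra! ⟨x, hx, hfx⟩
  have hcont : ContinuousOn f (Icc a x) := hf.mono (Icc_subset_Ico_right hx.2)
  have hzeros : ∀ y ∈ Icc a x, f y ≤ 0 → ∃ z ∈ Icc a y, f z = 0 := fun y hy hfy =>
    intermediate_value_Icc' hy.1 (hcont.mono (Icc_subset_Icc_right hy.2)) ⟨hfy, ha.le⟩
  obtain ⟨σ, ⟨hσ, hfσ⟩, hleast⟩ : ∃ σ, IsLeast (Icc a x ∩ f ⁻¹' {0}) σ := by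
    obtain ⟨z, hz, hfz⟩ := hzeros x ⟨hx.1, le_rfl⟩ hfx
    exact (isCompact_Icc.of_isClosed_subset
      (hcont.preimage_isClosed_of_isClosed isClosed_Icc isClosed_singleton)
      inter_subset_left).exists_isLeast ⟨z, hz, hfz⟩
  have haσ : a < σ := hσ.1.lt_of_ne (by rintro rfl; exact ha.ne' hfσ)
  have hpos : ∀ y ∈ Ioo a σ, 0 < f y := by
    refine fun y hy => not_le.1 fun hfy => ?_
    obtain ⟨z, hz, hfz⟩ := hzeros y ⟨hy.1.le, hy.2.le.trans hσ.2⟩ hfy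
    exact (hleast ⟨⟨hz.1, hz.2.trans (hy.2.le.trans hσ.2)⟩, hfz⟩).not_gt (hz.2.trans_lt hy.2)
  -- a positive derivative at the first zero `σ` makes `f` negative just to its left
  have hsign := eventually_nhdsWithin_sign_eq_of_deriv_pos
    (hzero σ ⟨haσ, hσ.2.trans_lt hx.2⟩ hfσ) hfσ
  obtain ⟨y, hy, hsy⟩ :=
    ((eventually_mem_set.2 (Ioo_mem_nhdsLT haσ)).and (nhdsWithin_le_nhds hsign)).exists
  rw [sign_pos (hpos y hy), sign_neg (sub_neg.2 hy.2)] at hsy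
  exact absurd hsy (by decide)

theorem hasDerivAt_besselJ (n : ℕ) (x : ℝ) :
    HasDerivAt (besselJ n) ((1 / π) * ∫ θ in (0:ℝ)..π, sin θ * sin (n * θ - x * sin θ)) x := by
  have hF := hasDerivAt_integral_of_dominated_loc_of_deriv_le (μ := MeasureTheory.volume)
    (F := fun y θ => cos (n * θ - y * sin θ)) (F' := fun y θ => sin θ * sin (n * θ - y * sin θ))
    (x₀ := x) (a := 0) (b := π) (bound := fun _ => 1) (Metric.ball_mem_nhds x one_pos)
    (.of_forall fun _ => (Continuous.aestronglyMeasurable (by fun_prop)).restrict)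
    (Continuous.intervalIntegrable (by fun_prop) 0 π)
    ((Continuous.aestronglyMeasurable (by fun_prop)).restrict)
    (.of_forall fun θ _ y _ => by
      simpa [abs_mul] using mul_le_one₀ (abs_sin_le_one θ) (abs_nonneg _) (abs_sin_le_one _))
    intervalIntegrable_const
    (.of_forall fun θ _ y _ => by
      have := ((hasDerivAt_mul_const (sin θ)).const_sub ((n : ℝ) * θ) (x := y)).cos
      exact this.congr_deriv (by ring))
  exact hF.2.const_mul (1 / π)

theorem continuous_besselJ (n : ℕ) : Continuous (besselJ n) :=
  continuous_iff_continuousAt.2 fun x => (hasDerivAt_besselJ n x).continuousAt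

@[simp]
theorem besselJ_zero_zero : besselJ 0 0 = 1 := by
  simp [besselJ, pi_ne_zero]

@[simp]
theorem besselJ_one_zero : besselJ 1 0 = 0 := by
  simp [besselJ]

theorem integral_cos_mul_cos_mul_sin (x : ℝ) :
    ∫ θ in (0:ℝ)..π, cos θ * cos (x * sin θ) = 0 := by
  -- the integrand is odd about `π / 2`
  have h := integral_comp_sub_left (a := 0) (b := π) (fun θ => cos θ * cos (x * sin θ)) π
  simp only [cos_pi_sub, sin_pi_sub, neg_mul, integral_neg, sub_self, sub_zero] at h
  linarith

theorem besselJ_one_eq (x : ℝ) :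
    besselJ 1 x = (1 / π) * ∫ θ in (0:ℝ)..π, sin θ * sin (x * sin θ) := by
  simp only [besselJ, Nat.cast_one, one_mul, cos_sub]
  rw [integral_add (Continuous.intervalIntegrable (by fun_prop) 0 π)
    (Continuous.intervalIntegrable (by fun_prop) 0 π), integral_cos_mul_cos_mul_sin, zero_add]

theorem hasDerivAt_besselJ_zero (x : ℝ) : HasDerivAt (besselJ 0) (-besselJ 1 x) x := by
  convert hasDerivAt_besselJ 0 x using 1
  simp [besselJ_one_eq, mul_neg, integral_neg]

theorem integral_one_sub_mul_cos_mul_cos_sub (x : ℝ) :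
    ∫ θ in (0:ℝ)..π, (1 - x * cos θ) * cos (θ - x * sin θ) = 0 := by
  have hderiv : ∀ θ ∈ uIcc 0 π, HasDerivAt (fun θ => sin (θ - x * sin θ))
      ((1 - x * cos θ) * cos (θ - x * sin θ)) θ := fun θ _ => by
    simpa [mul_comm] using ((hasDerivAt_id θ).sub ((hasDerivAt_sin θ).const_mul x)).sin
  rw [integral_eq_sub_of_hasDerivAt hderiv (Continuous.intervalIntegrable (by fun_prop) 0 π)]
  simp

theorem hasDerivAt_besselJ_one {x : ℝ} (hx : x ≠ 0) :
    HasDerivAt (besselJ 1) (besselJ 0 x - besselJ 1 x / x) x := by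
  have hint : ∀ f : ℝ → ℝ, Continuous f → IntervalIntegrable f MeasureTheory.volume 0 π :=
    fun f hf => hf.intervalIntegrable 0 π
  have hsplit : ∫ θ in (0:ℝ)..π, sin θ * sin ((1 : ℕ) * θ - x * sin θ) =
      (∫ θ in (0:ℝ)..π, cos ((0 : ℕ) * θ - x * sin θ))
        - x⁻¹ * (∫ θ in (0:ℝ)..π, cos ((1 : ℕ) * θ - x * sin θ))
        + x⁻¹ * ∫ θ in (0:ℝ)..π, (1 - x * cos θ) * cos (θ - x * sin θ) := by
    rw [← integral_const_mul, ← integral_const_mul,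
      ← integral_sub (hint _ (by fun_prop)) ((hint _ (by fun_prop)).const_mul _),
      ← integral_add (hint _ (by fun_prop)) ((hint _ (by fun_prop)).const_mul _)]
    refine integral_congr fun θ _ => ?_
    simp only [Nat.cast_zero, Nat.cast_one, zero_mul, one_mul, zero_sub, cos_neg]
    have hcos : cos (x * sin θ) = cos θ * cos (θ - x * sin θ) + sin θ * sin (θ - x * sin θ) := by
      rw [← cos_sub, sub_sub_cancel]
    rw [hcos]
    field_simp
    ring
  convert hasDerivAt_besselJ 1 x using 1
  rw [hsplit, integral_one_sub_mul_cos_mul_cos_sub, mul_zero, add_zero, besselJ, besselJ]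
  field_simp

theorem besselJ_one_lt_besselJ_zero {μ : ℝ}
    (hne : ∀ x, 0 < x → x < μ → besselJ 0 x ≠ besselJ 1 x) :
    ∀ x ∈ Ico 0 μ, besselJ 1 x < besselJ 0 x := by
  refine fun x hx => sub_pos.1 (pos_on_Ico_of_deriv_pos_at_zeros (f := besselJ 0 - besselJ 1)
    ((continuous_besselJ 0).sub (continuous_besselJ 1)).continuousOn (by simp)
    (fun y hy hy0 => absurd (sub_eq_zero.1 hy0) (hne y hy.1 hy.2)) x hx)

theorem besselJ_zero_add_besselJ_one_pos {μ : ℝ}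
    (hlt : ∀ x ∈ Ico 0 μ, besselJ 1 x < besselJ 0 x) :
    ∀ x ∈ Ico 0 μ, 0 < besselJ 0 x + besselJ 1 x := by
  refine pos_on_Ico_of_deriv_pos_at_zeros (f := besselJ 0 + besselJ 1)
    ((continuous_besselJ 0).add (continuous_besselJ 1)).continuousOn (by simp) fun σ hσ hσ0 => ?_
  have hJ1 : besselJ 1 σ = -besselJ 0 σ := eq_neg_of_add_eq_zero_right hσ0
  have hJ0 : 0 < besselJ 0 σ := by linarith [hlt σ (Ioo_subset_Ico_self hσ)]
  rw [((hasDerivAt_besselJ_zero σ).add (hasDerivAt_besselJ_one hσ.1.ne')).deriv, hJ1]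
  have : -besselJ 0 σ / σ < 0 := div_neg_of_neg_of_pos (neg_neg_of_pos hJ0) hσ.1
  linarith

theorem hasDerivAt_mul_besselJ_sq_add_sq {c x : ℝ} (hcx : c * x ≠ 0) :
    HasDerivAt (fun r => r * (besselJ 0 (c * r) ^ 2 + besselJ 1 (c * r) ^ 2))
      (besselJ 0 (c * x) ^ 2 - besselJ 1 (c * x) ^ 2) x := by
  have hlin : HasDerivAt (fun r => c * r) c x := by simpa using (hasDerivAt_id x).const_mul c
  have h0 := (hasDerivAt_besselJ_zero (c * x)).comp x hlin
  have h1 := (hasDerivAt_besselJ_one hcx).comp x hlin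
  refine ((hasDerivAt_id x).mul ((h0.pow 2).add (h1.pow 2))).congr_deriv ?_
  obtain ⟨hc, hx⟩ := mul_ne_zero_iff.1 hcx
  simp only [Pi.add_apply, Pi.pow_apply, Function.comp_apply, id]
  field_simp
  ring

theorem H_strictMono_general (μ : ℝ) (hμ : 0 < μ)
    (hmin : ∀ x, 0 < x → x < μ → besselJ 0 x ≠ besselJ 1 x) :
    StrictMonoOn (fun r : ℝ => r * ((besselJ 0 (μ * r)) ^ 2 + (besselJ 1 (μ * r)) ^ 2))
      (Set.Ioo 0 1) := by
  have hlt := besselJ_one_lt_besselJ_zero hmin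
  have hsum := besselJ_zero_add_besselJ_one_pos hlt
  have hderiv (r : ℝ) (hr : r ∈ Ioo 0 1) :=
    hasDerivAt_mul_besselJ_sq_add_sq (mul_pos hμ hr.1).ne'
  refine strictMonoOn_of_hasDerivWithinAt_pos (convex_Ioo 0 1)
    (f' := fun r => besselJ 0 (μ * r) ^ 2 - besselJ 1 (μ * r) ^ 2)
    (fun r hr => (hderiv r hr).continuousAt.continuousWithinAt) ?_ ?_ <;> rw [interior_Ioo]
  · exact fun r hr => (hderiv r hr).hasDerivWithinAt
  intro r hr
  have hμr : μ * r ∈ Ico 0 μ := ⟨(mul_pos hμ hr.1).le, mul_lt_of_lt_one_right hμ hr.2⟩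
  rw [sq_sub_sq]
  exact mul_pos (hsum _ hμr) (sub_pos.2 (hlt _ hμr))

theorem H_strictMono (μ : ℝ) (hμ : 0 < μ)
    (hroot : besselJ 0 μ = besselJ 1 μ)
    (hmin : ∀ x, 0 < x → x < μ → besselJ 0 x ≠ besselJ 1 x) :
    StrictMonoOn (fun r : ℝ => r * ((besselJ 0 (μ * r)) ^ 2 + (besselJ 1 (μ * r)) ^ 2))
      (Set.Ioo 0 1) :=
  H_strictMono_general μ hμ hmin
end

section
/- Let k ≥ 1 be a natural number and let u : (0,1) → ℂ be continuously differentiable with u(0⁺) = 0 and u, u', u/r ∈ L²((0,1); r dr). Then ∫₀¹ |u'(r) + ((k+1)/r)u(r)|² r dr ≥ ∫₀¹ |u'(r) + (1/r)u(r)|² r dr + k|u(1)|². -/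
/-!
With `v = u / r` one has `u' + (k + 1) v = (u' + v) + k v`, and expanding the square gives,
pointwise on `(0, 1)`,
`|u' + (k+1) u / r|² r = |u' + u / r|² r + k (|u|²)' + (2k + k²) |u|² / r`.
Drop the last term, which is nonnegative, and integrate: the fundamental theorem of calculus turns
`k ∫₀¹ (|u|²)'` into `k |u(1)|²` because `u(0⁺) = 0`. Every integrand is integrable because `u'` and
`u / r` lie in `L²(r dr)`; for `(|u|²)' = 2⟪u, u'⟫` this follows by polarization.
-/

open MeasureTheory Set Filter Topology

open scoped InnerProductSpace

theorem integrableOn_norm_add_sq_mul {α E : Type*} [MeasurableSpace α] [NormedAddCommGroup E]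
    {μ : Measure α} {s : Set α} {f g : α → E} {w : α → ℝ} (hs : MeasurableSet s)
    (hw : ∀ x ∈ s, 0 ≤ w x) (hf : IntegrableOn (fun x => ‖f x‖ ^ 2 * w x) s μ)
    (hg : IntegrableOn (fun x => ‖g x‖ ^ 2 * w x) s μ)
    (hm : AEStronglyMeasurable (fun x => ‖f x + g x‖ ^ 2 * w x) (μ.restrict s)) :
    IntegrableOn (fun x => ‖f x + g x‖ ^ 2 * w x) s μ := by
  refine Integrable.mono' ((hf.add hg).const_mul 2) hm ((ae_restrict_iff' hs).2 ?_)
  refine Eventually.of_forall fun x hx => ?_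
  have hsq : ‖f x + g x‖ ^ 2 ≤ 2 * (‖f x‖ ^ 2 + ‖g x‖ ^ 2) :=
    (pow_le_pow_left₀ (norm_nonneg _) (norm_add_le _ _) 2).trans add_sq_le
  have hwx := hw x hx
  rw [Real.norm_of_nonneg (by positivity)]
  simp only [Pi.add_apply]
  nlinarith

theorem integrableOn_norm_add_div_mul_sq_mul {u v : ℝ → ℂ} {s : Set ℝ} (hs : MeasurableSet s)
    (hs₀ : s ⊆ Ioi 0) (hv : ContinuousOn v s) (hu : ContinuousOn u s)
    (hv₂ : IntegrableOn (fun r => ‖v r‖ ^ 2 * r) s)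
    (hu₂ : IntegrableOn (fun r => ‖u r / r‖ ^ 2 * r) s) (c : ℂ) :
    IntegrableOn (fun r => ‖v r + (c / r) * u r‖ ^ 2 * r) s := by
  refine integrableOn_norm_add_sq_mul hs (fun r hr => (hs₀ hr).le) hv₂ ?_ ?_
  · refine IntegrableOn.congr_fun (hu₂.const_mul (‖c‖ ^ 2)) (fun r _ => ?_) hs
    simp only [norm_mul, norm_div]
    ring
  · have hcoef : ContinuousOn (fun r : ℝ => c / r) s :=
      continuousOn_const.div Complex.continuous_ofReal.continuousOn
        fun r hr => Complex.ofReal_ne_zero.2 (hs₀ hr).ne'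
    exact (((hv.add (hcoef.mul hu)).norm.pow 2).mul continuousOn_id).aestronglyMeasurable hs

theorem two_mul_inner_eq_norm_add_one_div_mul_sq_mul_sub (a b : ℂ) {r : ℝ} (hr : r ≠ 0) :
    2 * ⟪b, a⟫_ℝ = ‖a + (1 / r : ℂ) * b‖ ^ 2 * r - ‖a‖ ^ 2 * r - ‖b / r‖ ^ 2 * r := by
  simp only [Complex.inner, Complex.sq_norm, Complex.normSq_apply, Complex.add_re,
    Complex.add_im, Complex.mul_re, Complex.mul_im, Complex.div_re, Complex.div_im,
    Complex.ofReal_re, Complex.ofReal_im, Complex.conj_re, Complex.conj_im, Complex.one_re,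
    Complex.one_im]
  field_simp
  ring

theorem norm_add_one_div_mul_sq_mul_add_le (a b : ℂ) {k r : ℝ} (hk : 0 ≤ k) (hr : 0 < r) :
    ‖a + (1 / r : ℂ) * b‖ ^ 2 * r + k * (2 * ⟪b, a⟫_ℝ)
      ≤ ‖a + ((k + 1 : ℝ) / r : ℂ) * b‖ ^ 2 * r := by
  have expand : ‖a + ((k + 1 : ℝ) / r : ℂ) * b‖ ^ 2 * r
      = ‖a + (1 / r : ℂ) * b‖ ^ 2 * r + k * (2 * ⟪b, a⟫_ℝ) + (2 * k + k ^ 2) * (‖b‖ ^ 2 / r) := by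
    simp only [Complex.inner, Complex.sq_norm, Complex.normSq_apply, Complex.add_re,
      Complex.add_im, Complex.mul_re, Complex.mul_im, Complex.div_re, Complex.div_im,
      Complex.ofReal_re, Complex.ofReal_im, Complex.conj_re, Complex.conj_im, Complex.one_re,
      Complex.one_im]
    field_simp
    ring
  have : 0 ≤ (2 * k + k ^ 2) * (‖b‖ ^ 2 / r) := by positivity
  linarith

theorem hardy_type_lower_bound'_general (k : ℕ) (u : ℝ → ℂ)
    (hreg : ContDiffOn ℝ 1 u (Ioc 0 1))
    (h0 : Filter.Tendsto u (nhdsWithin 0 (Set.Ioi 0)) (nhds 0))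
    (hL2' : IntegrableOn (fun r => ‖deriv u r‖ ^ 2 * r) (Ioo 0 1))
    (hL2q : IntegrableOn (fun r => ‖u r / r‖ ^ 2 * r) (Ioo 0 1)) :
    ∫ r in (0:ℝ)..1, ‖deriv u r + ((k + 1 : ℕ) / r : ℂ) * u r‖ ^ 2 * r
      ≥ (∫ r in (0:ℝ)..1, ‖deriv u r + (1 / r : ℂ) * u r‖ ^ 2 * r) + k * ‖u 1‖ ^ 2 := by
  have hinterval {f : ℝ → ℝ} : IntegrableOn f (Ioo 0 1) → IntervalIntegrable f volume 0 1 :=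
    (intervalIntegrable_iff_integrableOn_Ioo_of_le zero_le_one).2
  have hreg' := hreg.mono Ioo_subset_Ioc_self
  have hderiv : ∀ r ∈ Ioo (0 : ℝ) 1, HasDerivAt u (deriv u r) r := fun r hr =>
    ((hreg'.differentiableOn one_ne_zero).differentiableAt (isOpen_Ioo.mem_nhds hr)).hasDerivAt
  have hweighted := integrableOn_norm_add_div_mul_sq_mul measurableSet_Ioo Ioo_subset_Ioi_self
    (hreg'.continuousOn_deriv_of_isOpen isOpen_Ioo le_rfl) hreg'.continuousOn hL2' hL2q
  have hF' : IntegrableOn (fun r => 2 * ⟪u r, deriv u r⟫_ℝ) (Ioo 0 1) :=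
    (((hweighted 1).sub hL2').sub hL2q).congr_fun (fun r hr =>
      (two_mul_inner_eq_norm_add_one_div_mul_sq_mul_sub _ _ hr.1.ne').symm) measurableSet_Ioo
  have hFTC : ∫ r in (0:ℝ)..1, 2 * ⟪u r, deriv u r⟫_ℝ = ‖u 1‖ ^ 2 := by
    have hu1 : Tendsto u (𝓝[<] 1) (𝓝 (u 1)) :=
      ((hreg.continuousOn 1 ⟨one_pos, le_rfl⟩).mono_of_mem_nhdsWithin
        (mem_of_superset (Ioo_mem_nhdsLT one_pos) Ioo_subset_Ioc_self)).tendsto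
    simpa using intervalIntegral.integral_eq_sub_of_hasDerivAt_of_tendsto one_pos
      (fun r hr => (hderiv r hr).norm_sq) (hinterval hF') (h0.norm.pow 2) (hu1.norm.pow 2)
  calc ∫ r in (0:ℝ)..1, ‖deriv u r + ((k + 1 : ℕ) / r : ℂ) * u r‖ ^ 2 * r
      ≥ ∫ r in (0:ℝ)..1, ‖deriv u r + (1 / r : ℂ) * u r‖ ^ 2 * r + k * (2 * ⟪u r, deriv u r⟫_ℝ) :=
        intervalIntegral.integral_mono_on_of_le_Ioo zero_le_one
          (hinterval ((hweighted 1).add (hF'.const_mul _))) (hinterval (hweighted _)) fun r hr => by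
            simpa using norm_add_one_div_mul_sq_mul_add_le (deriv u r) (u r) k.cast_nonneg hr.1
    _ = (∫ r in (0:ℝ)..1, ‖deriv u r + (1 / r : ℂ) * u r‖ ^ 2 * r) + k * ‖u 1‖ ^ 2 := by
        rw [intervalIntegral.integral_add (hinterval (hweighted 1)) (hinterval (hF'.const_mul _)),
          intervalIntegral.integral_const_mul, hFTC]

theorem hardy_type_lower_bound' (k : ℕ) (hk : 1 ≤ k) (u : ℝ → ℂ)
    (hreg : ContDiffOn ℝ 1 u (Ioc 0 1))
    (h0 : Filter.Tendsto u (nhdsWithin 0 (Set.Ioi 0)) (nhds 0))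
    (hL2 : IntegrableOn (fun r => ‖u r‖ ^ 2 * r) (Ioo 0 1))
    (hL2' : IntegrableOn (fun r => ‖deriv u r‖ ^ 2 * r) (Ioo 0 1))
    (hL2q : IntegrableOn (fun r => ‖u r / r‖ ^ 2 * r) (Ioo 0 1)) :
    ∫ r in (0:ℝ)..1, ‖deriv u r + ((k + 1 : ℕ) / r : ℂ) * u r‖ ^ 2 * r
      ≥ (∫ r in (0:ℝ)..1, ‖deriv u r + (1 / r : ℂ) * u r‖ ^ 2 * r) + k * ‖u 1‖ ^ 2 :=
  hardy_type_lower_bound'_general k u hreg h0 hL2' hL2q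
end

section
/- Let r₁, r₂, r_c be positive reals with r₁ ≤ r₂ and define G(r₁, r₂) = ((A + πr₁²)/(2π))^{1/2} · exp(2(r_c − r₂)·Φ(r₁, r_c)) for a fixed constant A > 0, where Φ(x,y) = (ln x − ln y)/(x−y) for x ≠ y and Φ(x,x)=1/x. Then G is nondecreasing in r₁ and nonincreasing in r₂. -/
/-!
For `x ≠ r_c`, `Φ(x, r_c)` is the slope of `log` between `r_c` and `x`, and `Φ(r_c, r_c) = 1 / r_c`
is the derivative of `log` at `r_c`; concavity of `log` makes this slope-or-derivative antitone in
`x`, and monotonicity of `log` makes it positive. Hence the exponent `2 (r_c - r₂) Φ(r₁, r_c)`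
increases in `r₁` (as `r_c - r₂ ≤ 0`) and decreases in `r₂`, while the square-root factor
increases in `r₁`.
-/

open Real

/-- The logarithmic-mean-type function `Φ`. -/
noncomputable def Phi (x y : ℝ) : ℝ :=
  if x = y then 1 / x else (Real.log x - Real.log y) / (x - y)

/-- The geometric functional `G(r₁,r₂)`. -/
noncomputable def Gfun (A rc r1 r2 : ℝ) : ℝ :=
  Real.sqrt ((A + π * r1 ^ 2) / (2 * π)) * Real.exp (2 * (rc - r2) * Phi r1 rc)

open Set

lemma ConcaveOn.antitoneOn_slope_or_deriv {S : Set ℝ} {f : ℝ → ℝ} {c f' : ℝ}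
    (hf : ConcaveOn ℝ S f) (hc : c ∈ S) (hf' : HasDerivAt f f' c) :
    AntitoneOn (fun x ↦ if x = c then f' else slope f c x) S := by
  intro a ha b hb hab
  obtain rfl | hac := eq_or_ne a c
  · obtain rfl | hbc := eq_or_ne b a
    · rfl
    simpa [hbc] using hf.slope_le_of_hasDerivAt hc hb (hab.lt_of_ne hbc.symm) hf'
  obtain rfl | hbc := eq_or_ne b c
  · simpa [hac, slope_comm f a b] using hf.le_slope_of_hasDerivAt ha hc (hab.lt_of_ne hac) hf'
  simpa [hac, hbc] using hf.slope_anti hc ⟨ha, hac⟩ ⟨hb, hbc⟩ hab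

lemma Phi_eq_slope_log {x rc : ℝ} (hx : x ≠ rc) : Phi x rc = slope log rc x := by
  rw [Phi, if_neg hx, slope_def_field]

lemma Phi_pos {x rc : ℝ} (hx : 0 < x) (hrc : 0 < rc) : 0 < Phi x rc := by
  by_cases h : x = rc
  · rw [Phi, if_pos h]
    positivity
  · rw [Phi_eq_slope_log h]
    exact strictMonoOn_log.slope_pos hrc hx (Ne.symm h)

lemma antitoneOn_Phi {rc : ℝ} (hrc : 0 < rc) : AntitoneOn (Phi · rc) (Ioi 0) := by
  have h := strictConcaveOn_log_Ioi.concaveOn.antitoneOn_slope_or_deriv hrc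
    (hasDerivAt_log hrc.ne')
  refine h.congr fun x _ ↦ ?_
  by_cases hx : x = rc
  · simp [Phi, hx]
  · simp only [if_neg hx, Phi_eq_slope_log hx]

lemma Gfun_le_Gfun_of_le_left {A rc r1 r1' r2 : ℝ} (hrc : 0 < rc) (hr1 : 0 < r1)
    (h : r1 ≤ r1') (hr2 : rc ≤ r2) : Gfun A rc r1 r2 ≤ Gfun A rc r1' r2 := by
  have hsqrt : √((A + π * r1 ^ 2) / (2 * π)) ≤ √((A + π * r1' ^ 2) / (2 * π)) := by
    gcongr
  have hexp : exp (2 * (rc - r2) * Phi r1 rc) ≤ exp (2 * (rc - r2) * Phi r1' rc) :=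
    exp_le_exp.mpr <|
      mul_le_mul_of_nonpos_left (antitoneOn_Phi hrc hr1 (hr1.trans_le h) h) (by linarith)
  exact mul_le_mul hsqrt hexp (exp_pos _).le (sqrt_nonneg _)

lemma Gfun_le_Gfun_of_le_right {A rc r1 r2 r2' : ℝ} (hrc : 0 < rc) (hr1 : 0 < r1)
    (h : r2 ≤ r2') : Gfun A rc r1 r2' ≤ Gfun A rc r1 r2 := by
  unfold Gfun
  have := Phi_pos hr1 hrc
  gcongr

theorem G_monotone_general (A rc : ℝ) (hrc : 0 < rc) :
    (∀ r1 r1' r2 : ℝ, 0 < r1 → r1 ≤ r1' → r1' ≤ r2 → rc < r2 →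
        Gfun A rc r1 r2 ≤ Gfun A rc r1' r2) ∧
    (∀ r1 r2 r2' : ℝ, 0 < r1 → r1 ≤ r2 → r2 ≤ r2' → rc < r2 →
        Gfun A rc r1 r2' ≤ Gfun A rc r1 r2) :=
  ⟨fun _ _ _ hr1 h _ hr2 ↦ Gfun_le_Gfun_of_le_left hrc hr1 h hr2.le,
    fun _ _ _ hr1 _ h _ ↦ Gfun_le_Gfun_of_le_right hrc hr1 h⟩

theorem G_monotone (A rc : ℝ) (hA : 0 < A) (hrc : 0 < rc) :
    (∀ r1 r1' r2 : ℝ, 0 < r1 → r1 ≤ r1' → r1' ≤ r2 → rc < r2 →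
        Gfun A rc r1 r2 ≤ Gfun A rc r1' r2) ∧
    (∀ r1 r2 r2' : ℝ, 0 < r1 → r1 ≤ r2 → r2 ≤ r2' → rc < r2 →
        Gfun A rc r1 r2' ≤ Gfun A rc r1 r2) :=
  G_monotone_general A rc hrc
end
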